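/- Let $x_* \in \mathbb{R}^3$, let $\nu \in \mathbb{R}^3$ be a unit vector, and set $x_j := x_* + \frac{1}{j}\nu$ for $j \in \mathbb{N}_{\ge 1}$. Let $B$ be an open ball centered at $x_*$ of radius $r > 0$. Then $\| \Phi_3(\cdot, x_j) \|_{H^1(B \cap \{x : (x - x_*)\cdot \nu < 0\})} \to \infty$ as $j \to \infty$, where $\Phi_3(x, y) = \frac{1}{4\pi|x-y|}$. -/

import Mathlib

/-!
The gradient of `Φ₃(·, y)` has length `1 / (4π|x - y|²)`. With `ε = 1/j` and `y = x* + εν`,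
the ball of radius `ε/4` about `x* - (ε/2)ν` lies in the half-ball and within distance `2ε` of
`y`, so there `|∇Φ₃| ≥ 1 / (16πε²)`. As that ball has volume of order `ε³`, the `L²` norm of
the gradient on the half-ball is at least of order `ε⁻² · ε^(3/2) = ε^(-1/2) → ∞`.
-/

open MeasureTheory Filter Topology Metric Module
open scoped RealInnerProductSpace ENNReal

section Gradient

variable {E : Type*} [NormedAddCommGroup E] [InnerProductSpace ℝ E]

theorem hasFDerivAt_norm_sub {x y : E} (h : x ≠ y) :
    HasFDerivAt (fun z => ‖z - y‖) (‖x - y‖⁻¹ • innerSL ℝ (x - y)) x := by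
  have hxy : ‖x - y‖ ≠ 0 := norm_ne_zero_iff.2 (sub_ne_zero.2 h)
  have hsq : HasFDerivAt (fun z : E => ‖z - y‖ ^ 2) (2 • innerSL ℝ (x - y)) x := by
    simpa using ((hasFDerivAt_id x).sub_const y).norm_sq
  have hsqrt := (Real.hasDerivAt_sqrt (pow_ne_zero 2 hxy)).comp_hasFDerivAt x hsq
  simp only [Function.comp_def, Real.sqrt_sq (norm_nonneg _)] at hsqrt
  refine hsqrt.congr_fderiv ?_
  rw [← Nat.cast_smul_eq_nsmul ℝ, smul_smul, Nat.cast_ofNat]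
  congr 1
  field_simp

variable [CompleteSpace E]

theorem hasGradientAt_one_div_mul_norm_sub {a : ℝ} (ha : a ≠ 0) {x y : E} (h : x ≠ y) :
    HasGradientAt (fun z => 1 / (a * ‖z - y‖)) (-(a * ‖x - y‖ ^ 3)⁻¹ • (x - y)) x := by
  have hxy : ‖x - y‖ ≠ 0 := norm_ne_zero_iff.2 (sub_ne_zero.2 h)
  have hinv : HasDerivAt (fun t : ℝ => 1 / (a * t)) (a⁻¹ * -(‖x - y‖ ^ 2)⁻¹) ‖x - y‖ := by
    simpa only [one_div, mul_inv] using (hasDerivAt_inv hxy).const_mul a⁻¹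
  rw [hasGradientAt_iff_hasFDerivAt]
  refine (hinv.comp_hasFDerivAt x (hasFDerivAt_norm_sub h)).congr_fderiv ?_
  ext w
  simp
  field_simp

theorem norm_gradient_one_div_mul_norm_sub {a : ℝ} (ha : 0 < a) {x y : E} (h : x ≠ y) :
    ‖gradient (fun z => 1 / (a * ‖z - y‖)) x‖ = (a * ‖x - y‖ ^ 2)⁻¹ := by
  have hxy : 0 < ‖x - y‖ := norm_pos_iff.2 (sub_ne_zero.2 h)
  rw [(hasGradientAt_one_div_mul_norm_sub ha.ne' h).gradient, norm_smul, norm_neg,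
    norm_inv, Real.norm_of_nonneg (by positivity)]
  field_simp

end Gradient

theorem mul_measure_rpow_le_eLpNorm_restrict {α F : Type*} [MeasurableSpace α]
    [NormedAddCommGroup F] {μ : Measure α} {f : α → F} {p : ℝ≥0∞} (hp0 : p ≠ 0) (hp : p ≠ ∞)
    {S A : Set α} (hS : MeasurableSet S) (hSA : S ⊆ A) {c : ℝ≥0∞} (hf : ∀ x ∈ S, c ≤ ‖f x‖ₑ) :
    c * μ S ^ (1 / p.toReal) ≤ eLpNorm f p (μ.restrict A) :=
  calc c * μ S ^ (1 / p.toReal)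
      = eLpNorm (fun _ => c) p (μ.restrict S) := by
        rw [eLpNorm_const' c hp0 hp, Measure.restrict_apply_univ, enorm_eq_self]
    _ ≤ eLpNorm f p (μ.restrict S) :=
        eLpNorm_mono_enorm_ae (ae_restrict_of_forall_mem hS fun x hx => by simpa using hf x hx)
    _ ≤ eLpNorm f p (μ.restrict A) := eLpNorm_mono_measure _ (Measure.restrict_mono hSA le_rfl)

section HalfBall

variable {E : Type*} [NormedAddCommGroup E] [InnerProductSpace ℝ E] {x₀ ν x : E} {ε r : ℝ}

theorem ball_subset_ball_inter_inner_neg (hν : ‖ν‖ = 1) (hε : 0 < ε) (hεr : 3 / 4 * ε ≤ r) :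
    ball (x₀ - (ε / 2) • ν) (ε / 4) ⊆ ball x₀ r ∩ {x | ⟪x - x₀, ν⟫ < 0} := by
  intro x hx
  rw [mem_ball, dist_eq_norm] at hx
  have hnorm : ‖(ε / 2) • ν‖ = ε / 2 := by
    rw [norm_smul, hν, Real.norm_of_nonneg (by positivity), mul_one]
  have hsplit : x - x₀ = (x - (x₀ - (ε / 2) • ν)) - (ε / 2) • ν := by abel
  refine ⟨?_, ?_⟩
  · rw [mem_ball, dist_eq_norm, hsplit]
    linarith [norm_sub_le (x - (x₀ - (ε / 2) • ν)) ((ε / 2) • ν)]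
  · have hinner : ⟪x - (x₀ - (ε / 2) • ν), ν⟫ ≤ ‖x - (x₀ - (ε / 2) • ν)‖ := by
      simpa [hν] using real_inner_le_norm (x - (x₀ - (ε / 2) • ν)) ν
    show ⟪x - x₀, ν⟫ < 0
    rw [hsplit, inner_sub_left, real_inner_smul_left, real_inner_self_eq_norm_sq, hν]
    linarith

theorem norm_sub_add_smul_mem_Ioo (hν : ‖ν‖ = 1) (hε : 0 < ε)
    (hx : x ∈ ball (x₀ - (ε / 2) • ν) (ε / 4)) :
    ‖x - (x₀ + ε • ν)‖ ∈ Set.Ioo (5 / 4 * ε) (7 / 4 * ε) := by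
  have hcenter : dist (x₀ - (ε / 2) • ν) (x₀ + ε • ν) = 3 / 2 * ε := by
    rw [dist_eq_norm, show x₀ - (ε / 2) • ν - (x₀ + ε • ν) = -((3 / 2 * ε) • ν) by
      rw [show 3 / 2 * ε = ε / 2 + ε by ring, add_smul]; abel,
      norm_neg, norm_smul, hν, Real.norm_of_nonneg (by positivity), mul_one]
  rw [mem_ball] at hx
  rw [← dist_eq_norm]
  constructor
  · linarith [dist_triangle (x₀ - (ε / 2) • ν) x (x₀ + ε • ν), dist_comm x (x₀ - (ε / 2) • ν)]
  · linarith [dist_triangle x (x₀ - (ε / 2) • ν) (x₀ + ε • ν)]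

end HalfBall

theorem tendsto_sqrt_nhdsGT_zero : Tendsto Real.sqrt (𝓝[>] 0) (𝓝[>] 0) :=
  tendsto_nhdsWithin_iff.2 ⟨(Real.continuous_sqrt.tendsto' 0 0 Real.sqrt_zero).mono_left
    nhdsWithin_le_nhds, eventually_mem_nhdsWithin.mono fun _ hε => Real.sqrt_pos.2 hε⟩

theorem tendsto_ofReal_inv_mul_rpow_nhdsGT_zero {V : ℝ≥0∞} (hV0 : V ≠ 0) (hV : V ≠ ∞) :
    Tendsto (fun ε : ℝ => ENNReal.ofReal (16 * Real.pi * ε ^ 2)⁻¹ *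
      (ENNReal.ofReal ((ε / 4) ^ 3) * V) ^ (1 / 2 : ℝ)) (𝓝[>] 0) (𝓝 ∞) := by
  have hlim : Tendsto (fun ε : ℝ => ENNReal.ofReal ((128 * Real.pi)⁻¹ * (√ε)⁻¹) *
      V ^ (1 / 2 : ℝ)) (𝓝[>] 0) (𝓝 ∞) := by
    have h := ENNReal.Tendsto.mul_const (b := V ^ (1 / 2 : ℝ))
      (ENNReal.tendsto_ofReal_atTop.comp ((tendsto_inv_nhdsGT_zero.comp
        tendsto_sqrt_nhdsGT_zero).const_mul_atTop (by positivity : (0 : ℝ) < (128 * Real.pi)⁻¹)))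
      (Or.inl ENNReal.top_ne_zero)
    rwa [ENNReal.top_mul (ENNReal.rpow_pos (pos_iff_ne_zero.2 hV0) hV).ne'] at h
  refine hlim.congr' (eventually_mem_nhdsWithin.mono fun ε (hε : 0 < ε) => ?_)
  have hscalar : (16 * Real.pi * ε ^ 2)⁻¹ * √((ε / 4) ^ 3) = (128 * Real.pi)⁻¹ * (√ε)⁻¹ := by
    obtain ⟨s, hs, rfl⟩ : ∃ s, 0 < s ∧ ε = s ^ 2 :=
      ⟨√ε, Real.sqrt_pos.2 hε, (Real.sq_sqrt hε.le).symm⟩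
    rw [show (s ^ 2 / 4) ^ 3 = (s ^ 3 / 8) ^ 2 by ring, Real.sqrt_sq (by positivity),
      Real.sqrt_sq hs.le]
    field_simp
    ring
  dsimp only
  rw [ENNReal.mul_rpow_of_nonneg _ _ (by norm_num), ENNReal.ofReal_rpow_of_nonneg (by positivity)
    (by norm_num), ← Real.sqrt_eq_rpow, ← mul_assoc, ← ENNReal.ofReal_mul (by positivity),
    hscalar]

section Blowup

variable {E : Type*} [NormedAddCommGroup E] [InnerProductSpace ℝ E] [CompleteSpace E]
  [MeasurableSpace E] {x₀ ν : E} {ε r : ℝ}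

theorem ofReal_mul_measure_ball_rpow_le_eLpNorm_gradient [OpensMeasurableSpace E]
    (μ : Measure E) (hν : ‖ν‖ = 1) (hε : 0 < ε) (hεr : 3 / 4 * ε ≤ r) :
    ENNReal.ofReal (16 * Real.pi * ε ^ 2)⁻¹ * μ (ball (x₀ - (ε / 2) • ν) (ε / 4)) ^ (1 / 2 : ℝ) ≤
      eLpNorm (gradient fun z => 1 / (4 * Real.pi * ‖z - (x₀ + ε • ν)‖)) 2
        (μ.restrict (ball x₀ r ∩ {x | ⟪x - x₀, ν⟫ < 0})) := by
  have key := mul_measure_rpow_le_eLpNorm_restrict (μ := μ)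
    (f := gradient fun z => 1 / (4 * Real.pi * ‖z - (x₀ + ε • ν)‖)) two_ne_zero
    ENNReal.ofNat_ne_top measurableSet_ball (ball_subset_ball_inter_inner_neg hν hε hεr)
    (c := ENNReal.ofReal (16 * Real.pi * ε ^ 2)⁻¹) fun x hx => by
      obtain ⟨hlo, hhi⟩ := norm_sub_add_smul_mem_Ioo (x₀ := x₀) hν hε hx
      have hpos : 0 < ‖x - (x₀ + ε • ν)‖ := by linarith
      rw [← ofReal_norm, norm_gradient_one_div_mul_norm_sub (by positivity)
        (sub_ne_zero.1 (norm_pos_iff.1 hpos))]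
      refine ENNReal.ofReal_le_ofReal (inv_anti₀ (by positivity) ?_)
      calc 4 * Real.pi * ‖x - (x₀ + ε • ν)‖ ^ 2 ≤ 4 * Real.pi * (2 * ε) ^ 2 := by
            gcongr; linarith
        _ = 16 * Real.pi * ε ^ 2 := by ring
  rwa [ENNReal.toReal_ofNat] at key

theorem tendsto_eLpNorm_gradient_nhdsGT_zero [FiniteDimensional ℝ E] [BorelSpace E]
    (μ : Measure E) [μ.IsAddHaarMeasure] (hE : finrank ℝ E ≤ 3) (hν : ‖ν‖ = 1) (hr : 0 < r) :
    Tendsto (fun ε : ℝ => eLpNorm (gradient fun z => 1 / (4 * Real.pi * ‖z - (x₀ + ε • ν)‖)) 2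
      (μ.restrict (ball x₀ r ∩ {x | ⟪x - x₀, ν⟫ < 0}))) (𝓝[>] 0) (𝓝 ∞) := by
  have : Nontrivial E := nontrivial_of_ne ν 0 (norm_ne_zero_iff.1 (by simp [hν]))
  refine tendsto_nhds_top_mono (tendsto_ofReal_inv_mul_rpow_nhdsGT_zero
    (measure_ball_pos μ 0 one_pos).ne' measure_ball_lt_top.ne) ?_
  filter_upwards [Ioo_mem_nhdsGT (by positivity : (0 : ℝ) < min 4 (4 / 3 * r))]
    with ε ⟨hε, hεmin⟩
  have hε4 : ε / 4 ≤ 1 := by linarith [min_le_left 4 (4 / 3 * r)]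
  calc ENNReal.ofReal (16 * Real.pi * ε ^ 2)⁻¹ *
        (ENNReal.ofReal ((ε / 4) ^ 3) * μ (ball 0 1)) ^ (1 / 2 : ℝ)
      ≤ ENNReal.ofReal (16 * Real.pi * ε ^ 2)⁻¹ *
        (ENNReal.ofReal ((ε / 4) ^ finrank ℝ E) * μ (ball 0 1)) ^ (1 / 2 : ℝ) := by
        gcongr ENNReal.ofReal _ * (ENNReal.ofReal ?_ * _) ^ _
        exact pow_le_pow_of_le_one (by positivity) hε4 hE
    _ = ENNReal.ofReal (16 * Real.pi * ε ^ 2)⁻¹ *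
        μ (ball (x₀ - (ε / 2) • ν) (ε / 4)) ^ (1 / 2 : ℝ) := by
        rw [Measure.addHaar_ball μ (x₀ - (ε / 2) • ν) (by positivity)]
    _ ≤ _ := ofReal_mul_measure_ball_rpow_le_eLpNorm_gradient μ hν hε
        (by linarith [min_le_right 4 (4 / 3 * r)])

end Blowup

/-- As the singularities `xⱼ = x* + ν/j` approach the boundary point `x*` from the
side `{(x - x*)·ν > 0}`, the `H¹`-norm of the fundamental solution
`Φ₃(·, xⱼ) = 1/(4π| · - xⱼ|)` on the half-ball
`B ∩ {x : (x - x*)·ν < 0}` blows up as `j → ∞`. -/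
theorem fundamental_solution_H1_blowup
    (x_star ν : EuclideanSpace ℝ (Fin 3)) (hν : ‖ν‖ = 1) (r : ℝ) (hr : 0 < r) :
    Filter.Tendsto
      (fun j : ℕ =>
        eLpNorm (fun x => 1 / (4 * Real.pi * ‖x - (x_star + (1 / (j : ℝ)) • ν)‖)) 2
          (volume.restrict
            (Metric.ball x_star r ∩ {x | ⟪x - x_star, ν⟫ < 0})) +
        eLpNorm
          (fun x => gradient
            (fun z => 1 / (4 * Real.pi * ‖z - (x_star + (1 / (j : ℝ)) • ν)‖)) x) 2
          (volume.restrict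
            (Metric.ball x_star r ∩ {x | ⟪x - x_star, ν⟫ < 0})))
      Filter.atTop (nhds ⊤) := by
  have hgrad := tendsto_eLpNorm_gradient_nhdsGT_zero (x₀ := x_star) volume
    (finrank_euclideanSpace_fin.le) hν hr
  have hj : Tendsto (fun j : ℕ => 1 / (j : ℝ)) atTop (𝓝[>] 0) :=
    tendsto_nhdsWithin_iff.2 ⟨tendsto_one_div_atTop_nhds_zero_nat,
      (eventually_gt_atTop 0).mono fun j hj => by simp [hj]⟩
  exact tendsto_nhds_top_mono (hgrad.comp hj) (Eventually.of_forall fun _ => le_add_self)
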